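/- For every entire function f on ℂ, sup_{z∈ℂ} |f(z)| e^{-(α/2)|z|²} is comparable (with constants depending only on α) to |f(0)| + sup_{z∈ℂ} (|f'(z)|/(1+|z|)) e^{-(α/2)|z|²}. -/

import Mathlib

/-!
Derivative bound: apply the Cauchy estimate on the unit circle around `z` to the twisted function
`f w * exp (-α * conj z * (w - z))`, whose derivative at `z` is `f' z - α * conj z * f z`. Since
`α/2 |w|² - α Re (conj z (w - z)) = α/2 |z|² + α/2 |w - z|²`, the twist turns the growth bound for
`f` at `w` into a bound `M e^{α/2} e^{α|z|²/2}` on the circle.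

Converse: integrate `f'` along the segment `[0, z]`. The bound `(1 + s) e^{αs²/2}` for `|f'|` at
radius `s` is dominated by the derivative of `2 e^{α/2} s + (2/α) e^{αs²/2} = O(e^{αs²/2})`.
-/

open Complex ENNReal NNReal
open scoped ComplexConjugate

lemma ENNReal.ofReal_add_iSup_ofReal {ι : Type*} [Nonempty ι] {x : ℝ} {a : ι → ℝ}
    (hx : 0 ≤ x) (ha : ∀ i, 0 ≤ a i) :
    ENNReal.ofReal x + ⨆ i, ENNReal.ofReal (a i) = ⨆ i, ENNReal.ofReal (x + a i) := by
  simp only [ENNReal.add_iSup, ENNReal.ofReal_add hx (ha _)]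

lemma ENNReal.iSup_ofReal_le_ofReal_mul_iSup_ofReal {ι : Type*} {a b : ι → ℝ} {c : ℝ}
    (hc : 0 < c) (h : ∀ M, 0 ≤ M → (∀ i, a i ≤ M) → ∀ i, b i ≤ c * M) :
    ⨆ i, ENNReal.ofReal (b i) ≤ ENNReal.ofReal c * ⨆ i, ENNReal.ofReal (a i) := by
  set S := ⨆ i, ENNReal.ofReal (a i)
  by_cases hS : S = ⊤
  · simp [hS, ENNReal.mul_top, hc]
  have ha : ∀ i, a i ≤ S.toReal := fun i =>
    (ENNReal.ofReal_le_iff_le_toReal hS).1 (le_iSup (fun i => ENNReal.ofReal (a i)) i)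
  refine iSup_le fun i => ?_
  calc ENNReal.ofReal (b i) ≤ ENNReal.ofReal (c * S.toReal) :=
        ENNReal.ofReal_le_ofReal (h _ ENNReal.toReal_nonneg ha i)
    _ = ENNReal.ofReal c * S := by rw [ENNReal.ofReal_mul hc.le, ENNReal.ofReal_toReal hS]

lemma Real.mul_exp_neg_le_iff {x M t : ℝ} : x * Real.exp (-t) ≤ M ↔ x ≤ M * Real.exp t := by
  rw [Real.exp_neg, ← div_eq_mul_inv, div_le_iff₀ (Real.exp_pos t)]

lemma Real.div_mul_exp_neg_le_iff {x d M t : ℝ} (hd : 0 < d) :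
    x / d * Real.exp (-t) ≤ M ↔ x ≤ M * d * Real.exp t := by
  rw [div_mul_eq_mul_div, div_le_iff₀ hd, Real.mul_exp_neg_le_iff]

lemma Complex.norm_sub_le_of_norm_deriv_le_radial {f : ℂ → ℂ} (hf : Differentiable ℂ f)
    {φ Φ : ℝ → ℝ} (hΦ : ∀ s, HasDerivAt Φ (φ s) s) (hφ : ∀ w, ‖deriv f w‖ ≤ φ ‖w‖) (z : ℂ) :
    ‖f z - f 0‖ ≤ Φ ‖z‖ - Φ 0 := by
  have hseg : ∀ t : ℝ, HasDerivAt (fun s : ℝ => f (s * z) - f 0) (deriv f (t * z) * z) t := by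
    intro t
    have := ((hf _).hasDerivAt.comp (t : ℂ) (hasDerivAt_mul_const z)).comp_ofReal
    simpa [mul_comm] using this.sub_const (f 0)
  have hΦseg : ∀ t : ℝ, HasDerivAt (fun s => Φ (s * ‖z‖) - Φ 0) (φ (t * ‖z‖) * ‖z‖) t :=
    fun t => ((hΦ _).comp t (hasDerivAt_mul_const ‖z‖)).sub_const (Φ 0)
  have key := image_norm_le_of_norm_deriv_right_le_deriv_boundary (a := 0) (b := 1)
    (fun t _ => (hseg t).continuousAt.continuousWithinAt) (fun t _ => (hseg t).hasDerivWithinAt)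
    (by simp) hΦseg (fun t ht => ?_) (Set.right_mem_Icc.2 zero_le_one)
  · simpa using key
  · have hnorm : ‖(t : ℂ) * z‖ = t * ‖z‖ := by
      rw [norm_mul, Complex.norm_real, Real.norm_of_nonneg ht.1]
    rw [norm_mul]
    exact mul_le_mul_of_nonneg_right (hnorm ▸ hφ _) (norm_nonneg z)

lemma Complex.sq_norm_eq_add_re_conj_mul_sub (z w : ℂ) :
    ‖w‖ ^ 2 = ‖z‖ ^ 2 + 2 * (conj z * (w - z)).re + ‖w - z‖ ^ 2 := by
  simp only [Complex.sq_norm, Complex.normSq_apply, Complex.mul_re, Complex.conj_re,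
    Complex.conj_im, Complex.sub_re, Complex.sub_im]
  ring

lemma Complex.norm_deriv_le_of_norm_le_mul_exp {f : ℂ → ℂ} (hf : Differentiable ℂ f) {α M : ℝ}
    (hα : 0 ≤ α) (hM : ∀ w, ‖f w‖ ≤ M * Real.exp (α / 2 * ‖w‖ ^ 2)) (z : ℂ) :
    ‖deriv f z‖ ≤ M * (Real.exp (α / 2) + α * ‖z‖) * Real.exp (α / 2 * ‖z‖ ^ 2) := by
  set c : ℂ := -(α * conj z)
  set g : ℂ → ℂ := fun w => f w * cexp (c * (w - z))
  have hg : HasDerivAt g (deriv f z + c * f z) z := by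
    have hexp : HasDerivAt (fun w => cexp (c * (w - z))) c z := by
      simpa using (((hasDerivAt_id z).sub_const z).const_mul c).cexp
    exact ((hf z).hasDerivAt.mul hexp).congr_deriv (by simp [mul_comm])
  have hsphere : ∀ w ∈ Metric.sphere z 1,
      ‖g w‖ ≤ M * Real.exp (α / 2) * Real.exp (α / 2 * ‖z‖ ^ 2) := by
    intro w hw
    rw [mem_sphere_iff_norm] at hw
    have hre : α / 2 * ‖w‖ ^ 2 + (c * (w - z)).re = α / 2 + α / 2 * ‖z‖ ^ 2 := by
      have : (c * (w - z)).re = -α * (conj z * (w - z)).re := by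
        simp only [c, neg_mul, Complex.neg_re, mul_assoc, Complex.re_ofReal_mul]
      rw [this, Complex.sq_norm_eq_add_re_conj_mul_sub z w, hw]
      ring
    calc ‖g w‖ = ‖f w‖ * Real.exp (c * (w - z)).re := by rw [norm_mul, Complex.norm_exp]
      _ ≤ M * Real.exp (α / 2 * ‖w‖ ^ 2) * Real.exp (c * (w - z)).re := by gcongr; exact hM w
      _ = M * Real.exp (α / 2) * Real.exp (α / 2 * ‖z‖ ^ 2) := by
        rw [mul_assoc, ← Real.exp_add, hre, Real.exp_add, mul_assoc]
  have hcauchy := Complex.norm_deriv_le_of_forall_mem_sphere_norm_le one_pos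
    (show Differentiable ℂ g by fun_prop).diffContOnCl hsphere
  rw [div_one, hg.deriv] at hcauchy
  have hcf : ‖c * f z‖ ≤ α * ‖z‖ * (M * Real.exp (α / 2 * ‖z‖ ^ 2)) := by
    rw [norm_mul, norm_neg, norm_mul, Complex.norm_real, Real.norm_of_nonneg hα,
      Complex.norm_conj]
    gcongr
    exact hM z
  calc ‖deriv f z‖ ≤ ‖deriv f z + c * f z‖ + ‖c * f z‖ := norm_le_add_norm_add _ _
    _ ≤ M * (Real.exp (α / 2) + α * ‖z‖) * Real.exp (α / 2 * ‖z‖ ^ 2) := by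
      linarith

noncomputable def gaussianMajorant (α s : ℝ) : ℝ :=
  2 * Real.exp (α / 2) * s + 2 / α * Real.exp (α / 2 * s ^ 2)

section GaussianMajorant

variable {α : ℝ}

lemma hasDerivAt_gaussianMajorant (hα : α ≠ 0) (s : ℝ) :
    HasDerivAt (gaussianMajorant α)
      (2 * Real.exp (α / 2) + 2 * s * Real.exp (α / 2 * s ^ 2)) s := by
  have hexp : HasDerivAt (fun s => Real.exp (α / 2 * s ^ 2))
      (Real.exp (α / 2 * s ^ 2) * (α / 2 * (2 * s))) s := by
    simpa using ((hasDerivAt_pow 2 s).const_mul (α / 2)).exp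
  refine (((hasDerivAt_id s).const_mul _).add (hexp.const_mul (2 / α))).congr_deriv ?_
  field_simp

lemma one_add_mul_exp_le_deriv_gaussianMajorant (hα : 0 ≤ α) {s : ℝ} (hs : 0 ≤ s) :
    (1 + s) * Real.exp (α / 2 * s ^ 2)
      ≤ 2 * Real.exp (α / 2) + 2 * s * Real.exp (α / 2 * s ^ 2) := by
  have hE := Real.exp_pos (α / 2 * s ^ 2)
  rcases le_total s 1 with hs1 | hs1
  · have hsq : α / 2 * s ^ 2 ≤ α / 2 :=
      mul_le_of_le_one_right (by positivity) (pow_le_one₀ (n := 2) hs hs1)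
    have := Real.exp_le_exp.2 hsq
    nlinarith
  · nlinarith [mul_le_mul_of_nonneg_right (by linarith : 1 + s ≤ 2 * s) hE.le,
      Real.exp_pos (α / 2)]

lemma le_mul_exp_half_mul_sq (hα : 0 < α) (s : ℝ) :
    s ≤ (1 + 1 / α) * Real.exp (α / 2 * s ^ 2) := by
  have hexp := Real.add_one_le_exp (α / 2 * s ^ 2)
  have hinv : 0 < 1 / α := by positivity
  have : (1 + 1 / α) * (α / 2 * s ^ 2 + 1) = 1 + 1 / α + α / 2 * s ^ 2 + s ^ 2 / 2 := by
    field_simp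
    ring
  nlinarith [sq_nonneg (s - 1)]

lemma gaussianMajorant_le (hα : 0 < α) (s : ℝ) :
    gaussianMajorant α s
      ≤ (2 * Real.exp (α / 2) * (1 + 1 / α) + 2 / α) * Real.exp (α / 2 * s ^ 2) := by
  have := mul_le_mul_of_nonneg_left (le_mul_exp_half_mul_sq hα s)
    (by positivity : 0 ≤ 2 * Real.exp (α / 2))
  rw [gaussianMajorant]
  linarith

lemma gaussianMajorant_zero_nonneg (hα : 0 ≤ α) : 0 ≤ gaussianMajorant α 0 := by
  simp only [gaussianMajorant]
  positivity

end GaussianMajorant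

lemma Complex.norm_le_of_norm_deriv_le_mul_exp {f : ℂ → ℂ} (hf : Differentiable ℂ f) {α A B : ℝ}
    (hα : 0 < α) (hA : ‖f 0‖ ≤ A) (hB : 0 ≤ B)
    (h : ∀ w, ‖deriv f w‖ ≤ B * (1 + ‖w‖) * Real.exp (α / 2 * ‖w‖ ^ 2)) (z : ℂ) :
    ‖f z‖ ≤ (A + (2 * Real.exp (α / 2) * (1 + 1 / α) + 2 / α) * B)
      * Real.exp (α / 2 * ‖z‖ ^ 2) := by
  have hrad : ‖f z - f 0‖ ≤ B * gaussianMajorant α ‖z‖ - B * gaussianMajorant α 0 :=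
    Complex.norm_sub_le_of_norm_deriv_le_radial hf
      (fun s => (hasDerivAt_gaussianMajorant hα.ne' s).const_mul B)
      (fun w => (h w).trans <| by
        rw [mul_assoc]
        exact mul_le_mul_of_nonneg_left
          (one_add_mul_exp_le_deriv_gaussianMajorant hα.le (norm_nonneg w)) hB) z
  have hG0 := mul_nonneg hB (gaussianMajorant_zero_nonneg hα.le)
  have hE : 1 ≤ Real.exp (α / 2 * ‖z‖ ^ 2) := Real.one_le_exp (by positivity)
  calc ‖f z‖ ≤ ‖f 0‖ + ‖f z - f 0‖ := norm_le_norm_add_norm_sub' _ _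
    _ ≤ A + B * gaussianMajorant α ‖z‖ := by linarith
    _ ≤ A * Real.exp (α / 2 * ‖z‖ ^ 2)
          + B * ((2 * Real.exp (α / 2) * (1 + 1 / α) + 2 / α) * Real.exp (α / 2 * ‖z‖ ^ 2)) :=
      add_le_add (le_mul_of_one_le_right ((norm_nonneg _).trans hA) hE)
        (mul_le_mul_of_nonneg_left (gaussianMajorant_le hα _) hB)
    _ = _ := by ring

noncomputable def fockSupNorm (α : ℝ) (f : ℂ → ℂ) : ℝ≥0∞ :=
  ⨆ z : ℂ, ENNReal.ofReal (‖f z‖ * Real.exp (-(α / 2) * ‖z‖ ^ 2))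

noncomputable def fockDerivNorm (α : ℝ) (f : ℂ → ℂ) : ℝ≥0∞ :=
  ENNReal.ofReal ‖f 0‖ +
    ⨆ z : ℂ, ENNReal.ofReal (‖deriv f z‖ / (1 + ‖z‖) * Real.exp (-(α / 2) * ‖z‖ ^ 2))

section FockNorms

variable {α : ℝ} {f : ℂ → ℂ}

lemma fockDerivNorm_eq_iSup :
    fockDerivNorm α f = ⨆ z : ℂ,
      ENNReal.ofReal (‖f 0‖ + ‖deriv f z‖ / (1 + ‖z‖) * Real.exp (-(α / 2) * ‖z‖ ^ 2)) :=
  ENNReal.ofReal_add_iSup_ofReal (norm_nonneg _) fun _ => by positivity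

theorem fockSupNorm_le_mul_fockDerivNorm (hα : 0 < α) (hf : Differentiable ℂ f) :
    fockSupNorm α f ≤
      ENNReal.ofReal (1 + (2 * Real.exp (α / 2) * (1 + 1 / α) + 2 / α)) * fockDerivNorm α f := by
  rw [fockDerivNorm_eq_iSup]
  refine ENNReal.iSup_ofReal_le_ofReal_mul_iSup_ofReal (by positivity) fun M hM0 hM z => ?_
  have h0 : ‖f 0‖ ≤ M := (le_add_of_nonneg_right (by positivity)).trans (hM 0)
  have hderiv : ∀ w, ‖deriv f w‖ ≤ M * (1 + ‖w‖) * Real.exp (α / 2 * ‖w‖ ^ 2) := fun w => by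
    have := (le_add_of_nonneg_left (norm_nonneg _)).trans (hM w)
    rwa [neg_mul, Real.div_mul_exp_neg_le_iff (by positivity)] at this
  rw [neg_mul, Real.mul_exp_neg_le_iff]
  calc ‖f z‖ ≤ (M + (2 * Real.exp (α / 2) * (1 + 1 / α) + 2 / α) * M)
        * Real.exp (α / 2 * ‖z‖ ^ 2) :=
      Complex.norm_le_of_norm_deriv_le_mul_exp hf hα h0 hM0 hderiv z
    _ = _ := by ring

theorem fockDerivNorm_le_mul_fockSupNorm (hα : 0 ≤ α) (hf : Differentiable ℂ f) :
    fockDerivNorm α f ≤ ENNReal.ofReal (1 + (Real.exp (α / 2) + α)) * fockSupNorm α f := by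
  rw [fockDerivNorm_eq_iSup]
  refine ENNReal.iSup_ofReal_le_ofReal_mul_iSup_ofReal (by positivity) fun M hM0 hM z => ?_
  have hgrowth : ∀ w, ‖f w‖ ≤ M * Real.exp (α / 2 * ‖w‖ ^ 2) := fun w => by
    have := hM w
    rwa [neg_mul, Real.mul_exp_neg_le_iff] at this
  have h0 : ‖f 0‖ ≤ M := by simpa using hM 0
  have hd : ‖deriv f z‖ / (1 + ‖z‖) * Real.exp (-(α / 2) * ‖z‖ ^ 2)
      ≤ (Real.exp (α / 2) + α) * M := by
    rw [neg_mul, Real.div_mul_exp_neg_le_iff (by positivity)]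
    refine (Complex.norm_deriv_le_of_norm_le_mul_exp hf hα hgrowth z).trans
      (mul_le_mul_of_nonneg_right ?_ (Real.exp_pos _).le)
    nlinarith [mul_nonneg (mul_nonneg hM0 (Real.exp_pos (α / 2)).le) (norm_nonneg z),
      mul_nonneg hM0 hα]
  linarith

end FockNorms

theorem fock_sup_norm_deriv_comparable (α : ℝ) (hα : 0 < α) :
    ∃ C : ℝ≥0, 0 < C ∧ ∀ f : ℂ → ℂ, Differentiable ℂ f →
      ((⨆ z : ℂ, ENNReal.ofReal (‖f z‖ * Real.exp (-(α / 2) * ‖z‖ ^ 2)))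
        ≤ C * (ENNReal.ofReal (‖f 0‖) +
            ⨆ z : ℂ, ENNReal.ofReal (‖deriv f z‖ / (1 + ‖z‖) *
              Real.exp (-(α / 2) * ‖z‖ ^ 2)))) ∧
      ((ENNReal.ofReal (‖f 0‖) +
            ⨆ z : ℂ, ENNReal.ofReal (‖deriv f z‖ / (1 + ‖z‖) *
              Real.exp (-(α / 2) * ‖z‖ ^ 2)))
        ≤ C * ⨆ z : ℂ, ENNReal.ofReal (‖f z‖ *
              Real.exp (-(α / 2) * ‖z‖ ^ 2))) := by
  set C := max (1 + (2 * Real.exp (α / 2) * (1 + 1 / α) + 2 / α)) (1 + (Real.exp (α / 2) + α))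
  have hC : ∀ c ≤ C, ∀ x, ENNReal.ofReal c * x ≤ (C.toNNReal : ℝ≥0∞) * x :=
    fun c hc x => mul_le_mul_left (ENNReal.ofReal_le_ofReal hc) x
  refine ⟨C.toNNReal, Real.toNNReal_pos.2 (by positivity), fun f hf => ⟨?_, ?_⟩⟩
  · exact (fockSupNorm_le_mul_fockDerivNorm hα hf).trans (hC _ (le_max_left _ _) _)
  · exact (fockDerivNorm_le_mul_fockSupNorm hα.le hf).trans (hC _ (le_max_right _ _) _)
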